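/- Let G be a connected graph of order n ≥ 5 that contains a Hamiltonian path and satisfies |E(G)| ≥ 2(n − 2). Then the zero forcing number of G is at most the zero forcing number of its line graph: Z(G) ≤ Z(L(G)). -/

import Mathlib

open SimpleGraph

variable {V : Type*}

/-- `W` is a resolving set of `G`: every pair of distinct vertices is resolved
by some vertex of `W` via graph distance. -/
def IsResolvingSet (G : SimpleGraph V) (W : Set V) : Prop :=
  ∀ u v : V, u ≠ v → ∃ w ∈ W, G.dist u w ≠ G.dist v w

/-- The metric dimension of `G`: minimum cardinality of a resolving set. -/
noncomputable def metricDim (G : SimpleGraph V) : ℕ :=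
  sInf {k | ∃ W : Set V, W.ncard = k ∧ IsResolvingSet G W}

/-- One global application of the zero-forcing color-change rule:
a black vertex `u` forces its unique white neighbor to become black. -/
def zfStep (G : SimpleGraph V) (S : Set V) : Set V :=
  S ∪ {v | ∃ u ∈ S, G.Adj u v ∧ ∀ w, G.Adj u w → w ∉ S → w = v}

/-- `S` is a zero forcing set of `G` if iterating the color-change rule
starting from `S` eventually turns all vertices black. -/
def IsZeroForcingSet (G : SimpleGraph V) (S : Set V) : Prop :=
  ∃ m : ℕ, (zfStep G)^[m] S = Set.univ

/-- The zero forcing number of `G`: minimum cardinality of a zero forcing set. -/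
noncomputable def zeroForcingNum (G : SimpleGraph V) : ℕ :=
  sInf {k | ∃ S : Set V, S.ncard = k ∧ IsZeroForcingSet G S}

/-- The wheel graph `W_{1,n} = C_n + K_1`: hub `none` joined to the cycle `C_n`
on vertices `some i`, `i : Fin n`. -/
def wheelGraph (n : ℕ) : SimpleGraph (Option (Fin n)) :=
  SimpleGraph.fromRel (fun u v =>
    match u, v with
    | none, some _ => True
    | some i, some j => ((i : ℕ) : ZMod n) + 1 = ((j : ℕ) : ZMod n)
    | _, _ => False)

/-- The bouquet of `n` circles of lengths `k 0 + 1, …, k (n-1) + 1`: the cut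
vertex is `none`; the `i`-th circle consists of `none` together with the vertices
`some ⟨i, j⟩`, `j : Fin (k i)`, in cyclic order. -/
def bouquet (n : ℕ) (k : Fin n → ℕ) : SimpleGraph (Option (Σ i : Fin n, Fin (k i))) :=
  SimpleGraph.fromRel (fun u v =>
    match u, v with
    | none, some a => (a.2 : ℕ) = 0 ∨ (a.2 : ℕ) = k a.1 - 1
    | some a, some b => a.1 = b.1 ∧ ((b.2 : ℕ) = (a.2 : ℕ) + 1)
    | _, _ => False)

/-- The path cover number of `G`: the minimum number of vertex-disjoint induced
paths covering all the vertices of `G`. -/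
noncomputable def pathCoverNum (G : SimpleGraph V) : ℕ :=
  sInf {m | ∃ f : V → Fin m, ∀ i : Fin m,
    ∃ k, 1 ≤ k ∧ Nonempty ((G.induce (f ⁻¹' {i})) ≃g SimpleGraph.pathGraph k)}

/-- `G` contains a Hamiltonian path. -/
def HasHamiltonianPath [DecidableEq V] (G : SimpleGraph V) : Prop :=
  ∃ (u v : V) (p : G.Walk u v), p.IsHamiltonian

/-!
Record for every edge the round in which it turns black when a zero forcing set `S` of `L(G)` is
run. An edge `f` forced by an edge `e = vx` is forced at their common vertex `v`, and no edge at
`v` turns black after `f`; hence distinct forced edges are forced at distinct vertices. Neither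
the far end `x` of the forcing edge of a first forced edge (all edges at `x` lie in `S`) nor the
far end of a last forced edge hosts a force, so `|Sᶜ| ≤ n - 2` and `Z(L(G)) ≥ |E(G)| - (n - 2)`.
On the other side, if `x ≁ y` and `c ~ x`, then all vertices but `c` and `y` form a zero forcing
set of `G`, so `Z(G) ≤ n - 2` unless `G = Kₙ`, where `Z(G) ≤ n - 1 ≤ C(n, 2) - (n - 2)`.
-/


section ZeroForcing

variable {G : SimpleGraph V} {S T : Set V}

lemma zfStep_mono (hST : S ⊆ T) : zfStep G S ⊆ zfStep G T := by
  rintro v (hv | ⟨u, hu, huv, hwhite⟩)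
  · exact Or.inl (hST hv)
  by_cases hvT : v ∈ T
  · exact Or.inl hvT
  exact Or.inr ⟨u, hST hu, huv, fun w huw hwT => hwhite w huw fun hwS => hwT (hST hwS)⟩

lemma subset_zfStep (S : Set V) : S ⊆ zfStep G S :=
  Set.subset_union_left

lemma monotone_zfStep_iterate (G : SimpleGraph V) (S : Set V) :
    Monotone fun k => (zfStep G)^[k] S :=
  fun _ _ hjk => Function.monotone_iterate_of_id_le (fun _ => subset_zfStep _) hjk S

lemma IsZeroForcingSet.mono (hS : IsZeroForcingSet G S) (hST : S ⊆ T) :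
    IsZeroForcingSet G T := by
  obtain ⟨m, hm⟩ := hS
  refine ⟨m, Set.eq_univ_of_univ_subset ?_⟩
  rw [← hm]
  exact Monotone.iterate (fun _ _ => zfStep_mono) m hST

lemma IsZeroForcingSet.of_zfStep (hS : IsZeroForcingSet G (zfStep G S)) :
    IsZeroForcingSet G S := by
  obtain ⟨m, hm⟩ := hS
  exact ⟨m + 1, by rwa [Function.iterate_succ_apply]⟩

lemma isZeroForcingSet_compl_singleton {u v : V} (huv : G.Adj u v) :
    IsZeroForcingSet G {v}ᶜ := by
  refine ⟨1, Set.eq_univ_of_forall fun w => ?_⟩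
  by_cases hwv : w = v
  · subst hwv
    exact Or.inr ⟨u, huv.ne, huv, fun w _ hw => by simpa using hw⟩
  · exact Or.inl hwv

lemma isZeroForcingSet_compl_pair {u a b : V} (hua : G.Adj u a) (hub : ¬G.Adj u b)
    (hu : u ≠ b) (hb : ∃ w, G.Adj b w) : IsZeroForcingSet G {a, b}ᶜ := by
  obtain ⟨w, hbw⟩ := hb
  refine IsZeroForcingSet.of_zfStep ((isZeroForcingSet_compl_singleton hbw.symm).mono ?_)
  intro v hvb
  by_cases hva : v = a
  · subst hva
    refine Or.inr ⟨u, by simp [hua.ne, hu], hua, fun w huw hw => ?_⟩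
    simp only [Set.mem_compl_iff, not_not, Set.mem_insert_iff, Set.mem_singleton_iff] at hw
    rcases hw with rfl | rfl
    · rfl
    · exact absurd huw hub
  · exact Or.inl (by simp_all)

lemma zeroForcingNum_le_ncard (hS : IsZeroForcingSet G S) : zeroForcingNum G ≤ S.ncard :=
  Nat.sInf_le ⟨S, rfl, hS⟩

namespace IsZeroForcingSet

open Classical in
noncomputable def blackeningTime (hS : IsZeroForcingSet G S) (v : V) : ℕ :=
  Nat.find (p := fun k => v ∈ (zfStep G)^[k] S) (hS.elim fun m hm => ⟨m, hm ▸ trivial⟩)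

variable (hS : IsZeroForcingSet G S) {v : V}

lemma mem_iterate_iff_blackeningTime_le {k : ℕ} :
    v ∈ (zfStep G)^[k] S ↔ hS.blackeningTime v ≤ k := by
  classical
  refine ⟨fun hv => Nat.find_min' _ hv, fun hk => ?_⟩
  exact monotone_zfStep_iterate G S hk (Nat.find_spec (p := fun k => v ∈ (zfStep G)^[k] S) _)

lemma blackeningTime_pos_iff : 0 < hS.blackeningTime v ↔ v ∉ S := by
  rw [Nat.pos_iff_ne_zero, Ne, ← Nat.le_zero, ← hS.mem_iterate_iff_blackeningTime_le,
    Function.iterate_zero_apply]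

lemma exists_forcer (hv : v ∉ S) : ∃ u, G.Adj u v ∧ hS.blackeningTime u < hS.blackeningTime v ∧
    ∀ w, G.Adj u w → hS.blackeningTime v ≤ hS.blackeningTime w → w = v := by
  have hpos := (hS.blackeningTime_pos_iff).2 hv
  obtain ⟨t, ht⟩ : ∃ t, hS.blackeningTime v = t + 1 :=
    ⟨hS.blackeningTime v - 1, by omega⟩
  have hvt : v ∈ zfStep G ((zfStep G)^[t] S) := by
    rw [← Function.iterate_succ_apply' (zfStep G), hS.mem_iterate_iff_blackeningTime_le, ht]
  rcases hvt with hv' | ⟨u, hu, huv, hwhite⟩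
  · rw [hS.mem_iterate_iff_blackeningTime_le] at hv'
    omega
  rw [hS.mem_iterate_iff_blackeningTime_le] at hu
  refine ⟨u, huv, by omega, fun w huw hw => hwhite w huw ?_⟩
  rw [hS.mem_iterate_iff_blackeningTime_le]
  omega

end IsZeroForcingSet

end ZeroForcing

section LineGraph

variable {G : SimpleGraph V} {S : Set G.edgeSet}

namespace IsZeroForcingSet

/-- `f` is forced at `v` by the edge `vx`. -/
lemma exists_forcing_vertex_lineGraph (hS : IsZeroForcingSet G.lineGraph S) {f : G.edgeSet}
    (hf : f ∉ S) :
    ∃ v ∈ (f : Sym2 V), ∃ x : V,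
      (∀ g : G.edgeSet, v ∈ (g : Sym2 V) → hS.blackeningTime f ≤ hS.blackeningTime g → g = f) ∧
      ∀ g : G.edgeSet, x ∈ (g : Sym2 V) → hS.blackeningTime g < hS.blackeningTime f := by
  obtain ⟨e, hef, hlt, hwhite⟩ := hS.exists_forcer hf
  obtain ⟨-, v, hve, hvf⟩ := lineGraph_adj_iff_exists.mp hef
  have hat : ∀ y ∈ (e : Sym2 V), ∀ g : G.edgeSet, y ∈ (g : Sym2 V) →
      hS.blackeningTime f ≤ hS.blackeningTime g → g = f := by
    refine fun y hy g hyg hfg => hwhite g (lineGraph_adj_iff_exists.mpr ⟨?_, y, hy, hyg⟩) hfg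
    rintro rfl
    omega
  refine ⟨v, hvf, Sym2.Mem.other hve, hat v hve, fun g hxg => ?_⟩
  by_contra! hfg
  obtain rfl := hat _ (Sym2.other_mem hve) g hxg hfg
  obtain rfl : g = e := Subtype.ext <|
    Sym2.eq_of_ne_mem (G.edge_other_ne e.2 hve) hxg hvf (Sym2.other_mem hve) hve
  omega

theorem ncard_compl_le_card_sub_two [Fintype V] (hS : IsZeroForcingSet G.lineGraph S) :
    Sᶜ.ncard ≤ Fintype.card V - 2 := by
  rcases Sᶜ.eq_empty_or_nonempty with hempty | ⟨f, hf⟩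
  · simp [hempty]
  have : Nonempty V := ⟨(f : Sym2 V).out.1⟩
  choose! φ hφ x hφunique hx using fun f (hf : f ∈ Sᶜ) => hS.exists_forcing_vertex_lineGraph hf
  obtain ⟨f₀, hf₀, hmin⟩ := Sᶜ.exists_min_image hS.blackeningTime Sᶜ.toFinite ⟨f, hf⟩
  obtain ⟨f₁, hf₁, hmax⟩ := Sᶜ.exists_max_image hS.blackeningTime Sᶜ.toFinite ⟨f, hf⟩
  set u := Sym2.Mem.other (hφ f₁ hf₁)
  have hx₀ : ∀ g ∈ Sᶜ, x f₀ ∉ (g : Sym2 V) := fun g hg hxg =>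
    (hx f₀ hf₀ g hxg).not_ge (hmin g hg)
  have hmaps : Set.MapsTo φ Sᶜ {x f₀, u}ᶜ := by
    intro g hg
    simp only [Set.mem_compl_iff, Set.mem_insert_iff, Set.mem_singleton_iff, not_or]
    refine ⟨fun h => hx₀ g hg (h ▸ hφ g hg), fun h => ?_⟩
    obtain rfl : f₁ = g := hφunique g hg f₁ (h ▸ Sym2.other_mem _) (hmax g hg)
    exact G.edge_other_ne f₁.2 (hφ f₁ hf₁) h.symm
  have hinj : Set.InjOn φ Sᶜ := by
    intro g hg g' hg' h
    rcases le_total (hS.blackeningTime g) (hS.blackeningTime g') with hle | hle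
    · exact (hφunique g hg g' (h ▸ hφ g' hg') hle).symm
    · exact hφunique g' hg' g (h ▸ hφ g hg) hle
  have hxu : x f₀ ≠ u := fun h => hx₀ f₁ hf₁ (h ▸ Sym2.other_mem _)
  calc Sᶜ.ncard ≤ ({x f₀, u}ᶜ : Set V).ncard := Set.ncard_le_ncard_of_injOn φ hmaps hinj
    _ = Fintype.card V - 2 := by
      rw [Set.ncard_compl, Set.ncard_pair hxu, Nat.card_eq_fintype_card]

end IsZeroForcingSet

theorem le_zeroForcingNum_lineGraph [Fintype V] (G : SimpleGraph V) :
    G.edgeSet.ncard - (Fintype.card V - 2) ≤ zeroForcingNum G.lineGraph := by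
  refine le_csInf ⟨_, Set.univ, rfl, 0, rfl⟩ ?_
  rintro _ ⟨S, rfl, hS⟩
  have hsplit : S.ncard + Sᶜ.ncard = G.edgeSet.ncard := by
    rw [Set.ncard_add_ncard_compl, Nat.card_coe_set_eq]
  have := hS.ncard_compl_le_card_sub_two
  omega

end LineGraph

section Bounds

variable [Fintype V] {G : SimpleGraph V}

lemma zeroForcingNum_le_card_sub_one {u v : V} (huv : G.Adj u v) :
    zeroForcingNum G ≤ Fintype.card V - 1 := by
  have := zeroForcingNum_le_ncard (isZeroForcingSet_compl_singleton huv)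
  rwa [Set.ncard_compl, Set.ncard_singleton, Nat.card_eq_fintype_card] at this

lemma zeroForcingNum_le_card_sub_two (hG : G ≠ ⊤) (hdeg : ∀ v, ∃ w, G.Adj v w) :
    zeroForcingNum G ≤ Fintype.card V - 2 := by
  obtain ⟨x, y, hxy, hnxy⟩ := ne_top_iff_exists_not_adj.mp hG
  obtain ⟨c, hxc⟩ := hdeg x
  have hcy : c ≠ y := by
    rintro rfl
    exact hnxy hxc
  have := zeroForcingNum_le_ncard (isZeroForcingSet_compl_pair hxc hnxy hxy (hdeg y))
  rwa [Set.ncard_compl, Set.ncard_pair hcy, Nat.card_eq_fintype_card] at this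

lemma ncard_edgeSet_top : (⊤ : SimpleGraph V).edgeSet.ncard = (Fintype.card V).choose 2 := by
  classical
  rw [← card_edgeFinset_top_eq_card_choose_two, ← Set.ncard_coe_finset, coe_edgeFinset]

end Bounds

lemma sub_one_add_sub_two_le_choose_two (n : ℕ) : n - 1 + (n - 2) ≤ n.choose 2 := by
  rcases Nat.lt_or_ge n 2 with hn | hn
  · omega
  obtain ⟨p, rfl⟩ : ∃ p, n = p + 2 := ⟨n - 2, by omega⟩
  rw [Nat.choose_two_right, Nat.le_div_iff_mul_le two_pos, Nat.add_sub_cancel,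
    show p + 2 - 1 = p + 1 by omega]
  nlinarith [Nat.le_mul_self p]

theorem zeroForcingNum_le_zeroForcingNum_lineGraph_of_hamiltonianPath_general {V : Type*}
    [Fintype V] (G : SimpleGraph V)
    (hn : 5 ≤ Fintype.card V) (hconn : G.Connected)
    (hE : 2 * (Fintype.card V - 2) ≤ G.edgeSet.ncard) :
    zeroForcingNum G ≤ zeroForcingNum G.lineGraph := by
  have : Nontrivial V := Fintype.one_lt_card_iff_nontrivial.mp (by omega)
  have hL := le_zeroForcingNum_lineGraph G
  by_cases hG : G = ⊤
  · subst hG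
    obtain ⟨u, v, huv⟩ := exists_pair_ne V
    have := zeroForcingNum_le_card_sub_one (G := ⊤) huv
    have := sub_one_add_sub_two_le_choose_two (Fintype.card V)
    rw [ncard_edgeSet_top] at hL
    omega
  · have := zeroForcingNum_le_card_sub_two hG hconn.preconnected.exists_adj_of_nontrivial
    omega

/-- If `G` is connected of order `n ≥ 5`, contains a Hamiltonian path, and has
`|E(G)| ≥ 2(n-2)` edges, then `Z(G) ≤ Z(L(G))`. -/
theorem zeroForcingNum_le_zeroForcingNum_lineGraph_of_hamiltonianPath {V : Type*}
    [Fintype V] [DecidableEq V] (G : SimpleGraph V)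
    (hn : 5 ≤ Fintype.card V) (hconn : G.Connected) (hham : HasHamiltonianPath G)
    (hE : 2 * (Fintype.card V - 2) ≤ G.edgeSet.ncard) :
    zeroForcingNum G ≤ zeroForcingNum G.lineGraph :=
  zeroForcingNum_le_zeroForcingNum_lineGraph_of_hamiltonianPath_general G hn hconn hE
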